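/- arXiv:1805.07482 — 5 statements merged into one kernel-verified Lean document; each statement's English description precedes it below -/
import Mathlib

section
/- If F is a submodular set function on a finite ground set V, then its multilinear extension f(x) = E_{S~q(·|x)}[F(S)], where q(S|x) = ∏_{i∈S} x_i ∏_{j∉S} (1-x_j), is continuous DR-submodular on [0,1]^n; i.e., for all a ≤ b in [0,1]^n, all coordinates i, and all k ≥ 0 with k e_i + b ∈ [0,1]^n, f(k e_i + a) − f(a) ≥ f(k e_i + b) − f(b). -/
open Finset

/-- The multilinear extension of a set function `F` on ground set `Fin n`. -/
noncomputable def multilinearExt (n : ℕ) (F : Finset (Fin n) → ℝ) (x : Fin n → ℝ) : ℝ :=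
  ∑ S : Finset (Fin n), F S * ((∏ i ∈ S, x i) * ∏ j ∈ Sᶜ, (1 - x j))

/-! The multilinear extension is affine in each coordinate `x i`, with slope the multilinear
extension of the marginal gain `S ↦ F (S ∪ {i}) - F (S \ {i})`. Submodularity says exactly that
this marginal gain is antitone, and the multilinear extension of an antitone set function is
antitone on `[0,1]^n`, by the same affine decomposition applied coordinate by coordinate.
Hence the slope in direction `e_i` at `a` dominates that at `b ≥ a`. -/

section MarginalGain

variable {α β : Type*} [DecidableEq α]

def marginalGain [Sub β] (F : Finset α → β) (i : α) (S : Finset α) : β :=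
  F (insert i S) - F (S.erase i)

theorem marginalGain_insert_self [Sub β] (F : Finset α → β) (i : α) (S : Finset α) :
    marginalGain F i (insert i S) = marginalGain F i S := by
  rw [marginalGain, marginalGain, insert_idem, erase_insert_eq_erase]

theorem marginalGain_eq_of_notMem [Sub β] (F : Finset α → β) {i : α} {S : Finset α}
    (hi : i ∉ S) : marginalGain F i S = F (insert i S) - F S := by
  rw [marginalGain, erase_eq_of_notMem hi]

theorem marginalGain_nonpos_of_antitone [AddGroup β] [PartialOrder β] [AddRightMono β]
    {G : Finset α → β} (hG : Antitone G) (i : α) (S : Finset α) : marginalGain G i S ≤ 0 :=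
  sub_nonpos.2 <| hG <| (erase_subset i S).trans (subset_insert i S)

theorem antitone_marginalGain_of_submodular [AddCommGroup β] [PartialOrder β]
    [IsOrderedAddMonoid β] {F : Finset α → β}
    (hF : ∀ A B : Finset α, F (A ∪ B) + F (A ∩ B) ≤ F A + F B) (i : α) :
    Antitone (marginalGain F i) := by
  intro S T hST
  have hunion : insert i S ∪ T.erase i = insert i T := by
    ext j; have := @hST j; simp only [mem_union, mem_insert, mem_erase]; tauto
  have hinter : insert i S ∩ T.erase i = S.erase i := by
    ext j; have := @hST j; simp only [mem_inter, mem_insert, mem_erase]; tauto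
  have := hF (insert i S) (T.erase i)
  rw [hunion, hinter] at this
  exact sub_le_sub_iff.2 (by simpa only [add_comm] using this)

end MarginalGain

section MultilinearExt

variable {n : ℕ}

theorem multilinearExt_eq_sum_powerset_erase (F : Finset (Fin n) → ℝ) (i : Fin n)
    (x : Fin n → ℝ) :
    multilinearExt n F x = ∑ S ∈ (univ.erase i).powerset,
      ((1 - x i) * F S + x i * F (insert i S)) *
        ((∏ j ∈ S, x j) * ∏ j ∈ Sᶜ.erase i, (1 - x j)) := by
  rw [multilinearExt]
  conv_lhs => rw [← powerset_univ, ← insert_erase (mem_univ i),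
    sum_powerset_insert (notMem_erase i univ), ← sum_add_distrib]
  refine sum_congr rfl fun S hS => ?_
  have hiS : i ∉ S := fun h => notMem_erase i univ (mem_powerset.1 hS h)
  rw [compl_insert, prod_insert hiS, ← mul_prod_erase _ _ (mem_compl.2 hiS)]
  ring

theorem multilinearExt_smul_single_add_sub (F : Finset (Fin n) → ℝ) (i : Fin n) (k : ℝ)
    (x : Fin n → ℝ) :
    multilinearExt n F (k • Pi.single i 1 + x) - multilinearExt n F x =
      k * multilinearExt n (marginalGain F i) x := by
  set x' : Fin n → ℝ := k • Pi.single i 1 + x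
  have hx'i : x' i = k + x i := by simp [x']
  have hx' : ∀ j ≠ i, x' j = x j := fun j hj => by simp [x', Pi.single_eq_of_ne hj]
  simp only [multilinearExt_eq_sum_powerset_erase _ i, ← sum_sub_distrib, mul_sum]
  refine sum_congr rfl fun S hS => ?_
  have hiS : i ∉ S := fun h => notMem_erase i univ (mem_powerset.1 hS h)
  have hin : ∏ j ∈ S, x' j = ∏ j ∈ S, x j :=
    prod_congr rfl fun j hj => hx' j (ne_of_mem_of_not_mem hj hiS)
  have hout : ∏ j ∈ Sᶜ.erase i, (1 - x' j) = ∏ j ∈ Sᶜ.erase i, (1 - x j) :=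
    prod_congr rfl fun j hj => by rw [hx' j (ne_of_mem_erase hj)]
  rw [hin, hout, hx'i, marginalGain_insert_self, marginalGain_eq_of_notMem F hiS]
  ring

theorem multilinearExt_nonpos {F : Finset (Fin n) → ℝ} (hF : ∀ S, F S ≤ 0)
    {x : Fin n → ℝ} (h0 : 0 ≤ x) (h1 : x ≤ 1) : multilinearExt n F x ≤ 0 :=
  sum_nonpos fun S _ => mul_nonpos_of_nonpos_of_nonneg (hF S) <|
    mul_nonneg (prod_nonneg fun j _ => h0 j) (prod_nonneg fun j _ => sub_nonneg.2 (h1 j))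

theorem multilinearExt_antitoneOn {G : Finset (Fin n) → ℝ} (hG : Antitone G)
    {x y : Fin n → ℝ} (h0 : 0 ≤ x) (hxy : x ≤ y) (h1 : y ≤ 1) :
    multilinearExt n G y ≤ multilinearExt n G x := by
  suffices ∀ T : Finset (Fin n), multilinearExt n G (T.piecewise y x) ≤ multilinearExt n G x by
    simpa using this univ
  intro T
  induction T using Finset.induction_on with
  | empty => simp
  | @insert t T htT ih =>
    set z := T.piecewise y x
    have hz : z ∈ Set.Icc x y := piecewise_mem_Icc' T hxy
    have hstep : (insert t T).piecewise y x = (y t - x t) • Pi.single t 1 + z := by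
      ext j
      by_cases hj : j = t
      · subst hj; simp [z, htT]
      · simp [z, hj]
    have hslope : multilinearExt n (marginalGain G t) z ≤ 0 :=
      multilinearExt_nonpos (marginalGain_nonpos_of_antitone hG t) (h0.trans hz.1) (hz.2.trans h1)
    calc multilinearExt n G ((insert t T).piecewise y x)
        = multilinearExt n G z + (y t - x t) * multilinearExt n (marginalGain G t) z := by
          rw [hstep, ← multilinearExt_smul_single_add_sub, add_sub_cancel]
      _ ≤ multilinearExt n G z :=
          add_le_of_nonpos_right (mul_nonpos_of_nonneg_of_nonpos (sub_nonneg.2 (hxy t)) hslope)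
      _ ≤ multilinearExt n G x := ih

end MultilinearExt

theorem multilinear_ext_of_submodular_is_DR_submodular_general
    (n : ℕ) (F : Finset (Fin n) → ℝ)
    (hsub : ∀ A B : Finset (Fin n), F (A ∪ B) + F (A ∩ B) ≤ F A + F B)
    (a b : Fin n → ℝ) (hab : a ≤ b)
    (ha : ∀ j, 0 ≤ a j) (hb : ∀ j, b j ≤ 1)
    (i : Fin n) (k : ℝ) (hk : 0 ≤ k) :
    multilinearExt n F (k • (Pi.single i (1:ℝ) : Fin n → ℝ) + b) - multilinearExt n F b ≤
      multilinearExt n F (k • (Pi.single i (1:ℝ) : Fin n → ℝ) + a) - multilinearExt n F a := by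
  rw [multilinearExt_smul_single_add_sub, multilinearExt_smul_single_add_sub]
  exact mul_le_mul_of_nonneg_left
    (multilinearExt_antitoneOn (antitone_marginalGain_of_submodular hsub i) ha hab hb) hk

/-- The multilinear extension of a submodular set function is continuous DR-submodular
on `[0,1]^n`. -/
theorem multilinear_ext_of_submodular_is_DR_submodular
    (n : ℕ) (F : Finset (Fin n) → ℝ)
    (hsub : ∀ A B : Finset (Fin n), F (A ∪ B) + F (A ∩ B) ≤ F A + F B)
    (a b : Fin n → ℝ) (hab : a ≤ b)
    (ha : ∀ j, 0 ≤ a j) (hb : ∀ j, b j ≤ 1)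
    (i : Fin n) (k : ℝ) (hk : 0 ≤ k)
    (hbk : ∀ j, (k • (Pi.single i (1:ℝ) : Fin n → ℝ) + b) j ≤ 1) :
    multilinearExt n F (k • (Pi.single i (1:ℝ) : Fin n → ℝ) + b) - multilinearExt n F b ≤
      multilinearExt n F (k • (Pi.single i (1:ℝ) : Fin n → ℝ) + a) - multilinearExt n F a :=
  multilinear_ext_of_submodular_is_DR_submodular_general n F hsub a b hab ha hb i k hk
end

section
/- If f : ℝ^n → ℝ is differentiable with antitone gradient (a ≤ b ⟹ ∇f(a) ≥ ∇f(b) componentwise), then f satisfies the diminishing-returns property: for all a ≤ b, all i, and all k ≥ 0, f(a + k e_i) − f(a) ≥ f(b + k e_i) − f(b). -/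
section LineRestriction

variable {E : Type*} [NormedAddCommGroup E] [NormedSpace ℝ E] {f : E → ℝ}

theorem hasDerivAt_comp_add_smul (hf : Differentiable ℝ f) (c v : E) (t : ℝ) :
    HasDerivAt (fun s : ℝ => f (c + s • v)) (fderiv ℝ f (c + t • v) v) t := by
  have hline : HasDerivAt (fun s : ℝ => c + s • v) v t := by
    simpa using ((hasDerivAt_id t).smul_const v).const_add c
  exact (hf (c + t • v)).hasFDerivAt.comp_hasDerivAt t hline

/- The increment `t ↦ f (b + t • v) - f (a + t • v)` has nonpositive derivative,
hence is antitone; compare its values at `0` and `k`. -/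
theorem sub_le_sub_of_fderiv_apply_le (hf : Differentiable ℝ f) {a b v : E}
    (hderiv : ∀ t : ℝ, fderiv ℝ f (b + t • v) v ≤ fderiv ℝ f (a + t • v) v)
    {k : ℝ} (hk : 0 ≤ k) :
    f (b + k • v) - f b ≤ f (a + k • v) - f a := by
  set g : ℝ → ℝ := fun s => f (b + s • v) - f (a + s • v)
  have hg : ∀ t, HasDerivAt g (fderiv ℝ f (b + t • v) v - fderiv ℝ f (a + t • v) v) t :=
    fun t => (hasDerivAt_comp_add_smul hf b v t).sub (hasDerivAt_comp_add_smul hf a v t)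
  have hanti : Antitone g := antitone_of_deriv_nonpos (fun t => (hg t).differentiableAt)
    fun t => (hg t).deriv ▸ sub_nonpos.mpr (hderiv t)
  have := hanti hk
  simp only [g, zero_smul, add_zero] at this
  linarith

end LineRestriction

/-- A differentiable function with antitone gradient satisfies the
diminishing-returns property. -/
theorem antitone_gradient_implies_DR
    (n : ℕ) (f : (Fin n → ℝ) → ℝ) (hf : Differentiable ℝ f)
    (hgrad : ∀ a b : Fin n → ℝ, a ≤ b → ∀ i : Fin n,
      fderiv ℝ f b (Pi.single i (1:ℝ)) ≤ fderiv ℝ f a (Pi.single i (1:ℝ))) :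
    ∀ a b : Fin n → ℝ, a ≤ b → ∀ i : Fin n, ∀ k : ℝ, 0 ≤ k →
      f (b + k • (Pi.single i (1:ℝ) : Fin n → ℝ)) - f b ≤
        f (a + k • (Pi.single i (1:ℝ) : Fin n → ℝ)) - f a := by
  intro a b hab i k hk
  exact sub_le_sub_of_fderiv_apply_le hf
    (fun t => hgrad _ _ (add_le_add_left hab _) i) hk
end

section
/- Let f be DR-submodular on [a,b] ⊆ ℝ^n, x ≤ y in [a,b] with x_i = a_i and y_i = b_i for a coordinate i. Let u_a maximize u ↦ f(x with coordinate i set to u) up to additive error δ/n and u_b maximize u ↦ f(y with coordinate i set to u) up to additive error δ/n. Then f(x with coordinate i set to u_b) − f(x) ≥ −δ/n and f(y with coordinate i set to u_a) − f(y) ≥ −δ/n. -/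
/-- `f` is continuous DR-submodular on the box `[a,b]`. -/
def DRSubmodularOn (n : ℕ) (f : (Fin n → ℝ) → ℝ) (a b : Fin n → ℝ) : Prop :=
  ∀ u v : Fin n → ℝ, a ≤ u → u ≤ v → v ≤ b → ∀ j : Fin n, ∀ k : ℝ, 0 ≤ k →
    v + k • (Pi.single j (1:ℝ) : Fin n → ℝ) ≤ b →
    f (v + k • (Pi.single j (1:ℝ) : Fin n → ℝ)) - f v ≤
      f (u + k • (Pi.single j (1:ℝ) : Fin n → ℝ)) - f u

/-! Each inequality compares the gain of moving coordinate `i` from `c` to `d` at the lower point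
`x` and at the upper point `y`; DR-submodularity says the gain at `x` is at least the gain at `y`.
For `x`, move from `a i` to `u_b`: at `y` this gain is `≥ -δ/n` because `u_b` is `δ/n`-optimal.
For `y`, move from `u_a` to `b i`: at `x` this gain is `≤ δ/n` because `u_a` is `δ/n`-optimal. -/

open Function

lemma add_smul_single_one_eq_update {ι : Type*} [DecidableEq ι] (x : ι → ℝ) (i : ι) (c : ℝ) :
    x + (c - x i) • Pi.single i (1 : ℝ) = update x i c := by
  ext j
  rcases eq_or_ne j i with rfl | h
  · simp
  · simp [h]

lemma DRSubmodularOn.update_sub_update_le {n : ℕ} {f : (Fin n → ℝ) → ℝ} {a b : Fin n → ℝ}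
    (hDR : DRSubmodularOn n f a b) {x y : Fin n → ℝ} (hax : a ≤ x) (hxy : x ≤ y) (hyb : y ≤ b)
    {i : Fin n} {c d : ℝ} (hac : a i ≤ c) (hcd : c ≤ d) (hdb : d ≤ b i) :
    f (update y i d) - f (update y i c) ≤ f (update x i d) - f (update x i c) := by
  have hshift : ∀ z : Fin n → ℝ,
      update z i c + (d - c) • Pi.single i (1 : ℝ) = update z i d := fun z => by
    simpa using add_smul_single_one_eq_update (update z i c) i d
  have h := hDR (update x i c) (update y i c) (le_update_iff.2 ⟨hac, fun j _ => hax j⟩)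
    (update_le_update_iff.2 ⟨le_rfl, fun j _ => hxy j⟩)
    (update_le_iff.2 ⟨hcd.trans hdb, fun j _ => hyb j⟩) i (d - c) (sub_nonneg.2 hcd)
    (by rw [hshift]; exact update_le_iff.2 ⟨hdb, fun j _ => hyb j⟩)
  rwa [hshift, hshift] at h

theorem dr_double_greedy_flip_lemma_general
    (n : ℕ) (f : (Fin n → ℝ) → ℝ) (a b : Fin n → ℝ)
    (hDR : DRSubmodularOn n f a b)
    (x y : Fin n → ℝ) (hax : a ≤ x) (hxy : x ≤ y) (hyb : y ≤ b)
    (i : Fin n) (hxi : x i = a i) (hyi : y i = b i)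
    (δ : ℝ)
    (ua ub : ℝ) (hua : ua ∈ Set.Icc (a i) (b i)) (hub : ub ∈ Set.Icc (a i) (b i))
    (hua_opt : ∀ u ∈ Set.Icc (a i) (b i),
      f (Function.update x i u) ≤ f (Function.update x i ua) + δ / n)
    (hub_opt : ∀ u ∈ Set.Icc (a i) (b i),
      f (Function.update y i u) ≤ f (Function.update y i ub) + δ / n) :
    f (Function.update x i ub) - f x ≥ -(δ / n) ∧
      f (Function.update y i ua) - f y ≥ -(δ / n) := by
  have hab : a i ≤ b i := hua.1.trans hua.2
  constructor
  · have hgain := hDR.update_sub_update_le hax hxy hyb le_rfl hub.1 hub.2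
    rw [show update x i (a i) = x from update_eq_self_iff.2 hxi.symm] at hgain
    linarith [hub_opt (a i) ⟨le_rfl, hab⟩]
  · have hgain := hDR.update_sub_update_le hax hxy hyb hua.1 hua.2 le_rfl
    rw [show update y i (b i) = y from update_eq_self_iff.2 hyi.symm] at hgain
    linarith [hua_opt (b i) ⟨hab, le_rfl⟩]

/-- Lemma 1 of the paper: flipping the approximate 1-D maximizers between the lower
iterate `x` and the upper iterate `y` decreases the objective by at most `δ/n`. -/
theorem dr_double_greedy_flip_lemma
    (n : ℕ) (f : (Fin n → ℝ) → ℝ) (a b : Fin n → ℝ) (hab : a ≤ b)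
    (hDR : DRSubmodularOn n f a b)
    (x y : Fin n → ℝ) (hax : a ≤ x) (hxy : x ≤ y) (hyb : y ≤ b)
    (i : Fin n) (hxi : x i = a i) (hyi : y i = b i)
    (δ : ℝ) (hδ : 0 ≤ δ)
    (ua ub : ℝ) (hua : ua ∈ Set.Icc (a i) (b i)) (hub : ub ∈ Set.Icc (a i) (b i))
    (hua_opt : ∀ u ∈ Set.Icc (a i) (b i),
      f (Function.update x i u) ≤ f (Function.update x i ua) + δ / n)
    (hub_opt : ∀ u ∈ Set.Icc (a i) (b i),
      f (Function.update y i u) ≤ f (Function.update y i ub) + δ / n) :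
    f (Function.update x i ub) - f x ≥ -(δ / n) ∧
      f (Function.update y i ua) - f y ≥ -(δ / n) :=
  dr_double_greedy_flip_lemma_general n f a b hDR x y hax hxy hyb i hxi hyi δ ua ub hua hub hua_opt
    hub_opt
end

section
/- For the FLID objective F(S) = ∑_{i∈S} u'_i + ∑_{d=1}^D max_{i∈S} W_{i,d} (with max over the empty set equal to 0), if for dimension d the indices are sorted so that W_{i_d(1),d} ≤ ... ≤ W_{i_d(n),d}, then the multilinear extension equals f̃(x) = ∑_i u'_i x_i + ∑_{d=1}^D ∑_{l=1}^n W_{i_d(l),d} · x_{i_d(l)} · ∏_{m=l+1}^n (1 − x_{i_d(m)}). -/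
open Finset

/-- Maximum of `g` over a finite set, with the convention `max ∅ = 0`. -/
noncomputable def finsetMax0 {α : Type*} (S : Finset α) (g : α → ℝ) : ℝ :=
  if h : S.Nonempty then S.sup' h g else 0

/-! The multilinear extension is linear in `F` and sends the indicator of
`{S | P ⊆ S ∧ S ∩ Q = ∅}` (with `P`, `Q` disjoint) to `∏_{i ∈ P} x_i ∏_{j ∈ Q} (1 - x_j)`.
The modular part of the FLID objective is a sum of such indicators with `P = {i}`, `Q = ∅`.
If column `d` is sorted by `σ`, then `max_{i ∈ S} W_{i,d} = ∑_l W_{σ l, d} [σ l is the last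
element of S in the order of σ]`, and "`σ l` is last" is the indicator with `P = {σ l}` and
`Q = σ {m | l < m}`. -/

theorem Finset.sum_boole_mul_prod_mul_prod_compl {ι R : Type*} [Fintype ι] [DecidableEq ι]
    [CommRing R] (x : ι → R) {P Q : Finset ι} (hPQ : Disjoint P Q) :
    ∑ S : Finset ι, (if P ⊆ S ∧ Disjoint S Q then 1 else 0) *
      ((∏ i ∈ S, x i) * ∏ j ∈ Sᶜ, (1 - x j)) = (∏ i ∈ P, x i) * ∏ j ∈ Q, (1 - x j) := by
  -- The weights `a`, `b` make `prod_add` expand `∏ i, (x i * a i + (1 - x i) * b i)` into the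
  -- sum over exactly the sets `S` with `P ⊆ S` and `Disjoint S Q`.
  set a : ι → R := fun i => if i ∉ Q then 1 else 0
  set b : ι → R := fun i => if i ∉ P then 1 else 0
  have hterm : ∀ S : Finset ι, (if P ⊆ S ∧ Disjoint S Q then 1 else 0) *
      ((∏ i ∈ S, x i) * ∏ j ∈ Sᶜ, (1 - x j)) =
      (∏ i ∈ S, x i * a i) * ∏ j ∈ univ \ S, (1 - x j) * b j := by
    intro S
    have hsub : (∀ j ∈ Sᶜ, j ∉ P) ↔ P ⊆ S := by simp only [mem_compl, not_imp_not, subset_iff]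
    have hdisj : (∀ i ∈ S, i ∉ Q) ↔ Disjoint S Q := disjoint_left.symm
    simp only [a, b, ← compl_eq_univ_sdiff, prod_mul_distrib, prod_boole, hsub, hdisj]
    split_ifs <;> simp_all
  have hfactor : ∀ i, x i * a i + (1 - x i) * b i =
      (if i ∈ P then x i else 1) * (if i ∈ Q then 1 - x i else 1) := by
    intro i
    by_cases hP : i ∈ P
    · simp [a, b, hP, disjoint_left.mp hPQ hP]
    · by_cases hQ : i ∈ Q <;> simp [a, b, hP, hQ]
  calc _ = ∑ S ∈ (univ : Finset ι).powerset,
        (∏ i ∈ S, x i * a i) * ∏ j ∈ univ \ S, (1 - x j) * b j := by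
        rw [powerset_univ]; exact sum_congr rfl fun S _ => hterm S
    _ = ∏ i, (x i * a i + (1 - x i) * b i) := (prod_add _ _ _).symm
    _ = _ := by simp_rw [hfactor, prod_mul_distrib, prod_ite_mem, univ_inter]

theorem Finset.mem_and_forall_lt_notMem_iff_eq_max' {α : Type*} [LinearOrder α] {T : Finset α}
    (hT : T.Nonempty) {l : α} : (l ∈ T ∧ ∀ m, l < m → m ∉ T) ↔ l = T.max' hT := by
  constructor
  · rintro ⟨hl, hlast⟩
    exact le_antisymm (T.le_max' l hl) (not_lt.mp fun h => hlast _ h (T.max'_mem hT))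
  · rintro rfl
    exact ⟨T.max'_mem hT, fun m hm hmT => (T.le_max' m hmT).not_gt hm⟩

theorem finsetMax0_map {α β : Type*} (S : Finset α) (e : α ↪ β) (g : β → ℝ) :
    finsetMax0 (S.map e) g = finsetMax0 S (g ∘ e) := by
  by_cases hS : S.Nonempty
  · rw [finsetMax0, finsetMax0, dif_pos hS.map, dif_pos hS, sup'_map]
  · rw [finsetMax0, finsetMax0, dif_neg (by simpa using hS), dif_neg hS]

theorem Monotone.finsetMax0_eq_sum_boole {α : Type*} [LinearOrder α] [Fintype α] {g : α → ℝ}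
    (hg : Monotone g) (T : Finset α) :
    finsetMax0 T g = ∑ l, g l * if l ∈ T ∧ ∀ m, l < m → m ∉ T then 1 else 0 := by
  by_cases hT : T.Nonempty
  · have hmax : T.sup' hT g = g (T.max' hT) :=
      le_antisymm (sup'_le _ _ fun i hi => hg (T.le_max' i hi)) (le_sup' g (T.max'_mem hT))
    simp_rw [T.mem_and_forall_lt_notMem_iff_eq_max' hT, mul_boole, sum_ite_eq', mem_univ,
      if_true, finsetMax0, dif_pos hT, hmax]
  · rw [not_nonempty_iff_eq_empty] at hT
    simp [finsetMax0, hT]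

def lastIndicator {α ι : Type*} [LinearOrder α] [Fintype α] [DecidableEq ι] (σ : α ≃ ι) (l : α)
    (S : Finset ι) : ℝ :=
  if σ l ∈ S ∧ ∀ m, l < m → σ m ∉ S then 1 else 0

theorem finsetMax0_eq_sum_lastIndicator {α ι : Type*} [LinearOrder α] [Fintype α] [DecidableEq ι]
    (σ : α ≃ ι) {g : ι → ℝ} (hsorted : Monotone (g ∘ σ)) (S : Finset ι) :
    finsetMax0 S g = ∑ l, g (σ l) * lastIndicator σ l S := by
  have hpull : finsetMax0 S g = finsetMax0 (S.map σ.symm.toEmbedding) (g ∘ σ) := by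
    rw [← Equiv.coe_toEmbedding, ← finsetMax0_map, map_map]
    simp
  rw [hpull, hsorted.finsetMax0_eq_sum_boole]
  simp [lastIndicator, mem_map_equiv]

section MultilinearExt

variable (n : ℕ) (x : Fin n → ℝ)

noncomputable def multilinearExtₗ : (Finset (Fin n) → ℝ) →ₗ[ℝ] ℝ where
  toFun F := multilinearExt n F x
  map_add' F G := by simp only [multilinearExt, Pi.add_apply, add_mul, sum_add_distrib]
  map_smul' c F := by simp only [multilinearExt, Pi.smul_apply, smul_eq_mul, mul_assoc, mul_sum,
    RingHom.id_apply]

@[simp]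
theorem multilinearExtₗ_apply (F : Finset (Fin n) → ℝ) :
    multilinearExtₗ n x F = multilinearExt n F x := rfl

variable {n}

theorem multilinearExt_boole_subset_disjoint {P Q : Finset (Fin n)} (hPQ : Disjoint P Q) :
    multilinearExt n (fun S => if P ⊆ S ∧ Disjoint S Q then 1 else 0) x =
      (∏ i ∈ P, x i) * ∏ j ∈ Q, (1 - x j) :=
  sum_boole_mul_prod_mul_prod_compl x hPQ

theorem multilinearExt_boole_mem (i : Fin n) :
    multilinearExt n (fun S => if i ∈ S then 1 else 0) x = x i := by
  simpa using multilinearExt_boole_subset_disjoint x (disjoint_empty_right {i})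

theorem multilinearExt_lastIndicator {α : Type*} [LinearOrder α] [Fintype α] (σ : α ≃ Fin n)
    (l : α) :
    multilinearExt n (lastIndicator σ l) x =
      x (σ l) * ∏ m ∈ univ.filter (fun m => l < m), (1 - x (σ m)) := by
  have hdisj : Disjoint {σ l} ((univ.filter (fun m => l < m)).map σ.toEmbedding) := by
    simp
  have h := multilinearExt_boole_subset_disjoint x hdisj
  simp only [prod_singleton, prod_map, Equiv.coe_toEmbedding] at h
  rw [← h]
  congr! 3 with S
  simp [lastIndicator, disjoint_right, -mem_map_equiv]

end MultilinearExt

theorem multilinear_ext_FLID_general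
    (n D : ℕ) (W : Fin n → Fin D → ℝ) (u' : Fin n → ℝ)
    (perm : Fin D → (Fin n ≃ Fin n))
    (hsorted : ∀ d : Fin D, ∀ l m : Fin n, l ≤ m → W (perm d l) d ≤ W (perm d m) d)
    (F : Finset (Fin n) → ℝ)
    (hF : ∀ S, F S = (∑ i ∈ S, u' i) + ∑ d : Fin D, finsetMax0 S (fun i => W i d))
    (x : Fin n → ℝ) :
    multilinearExt n F x =
      (∑ i : Fin n, u' i * x i) +
        ∑ d : Fin D, ∑ l : Fin n,
          W (perm d l) d * x (perm d l) *
            ∏ m ∈ Finset.univ.filter (fun m : Fin n => l < m), (1 - x (perm d m)) := by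
  have hdecomp : F = ∑ i, u' i • (fun S => if i ∈ S then (1 : ℝ) else 0) +
      ∑ d, ∑ l, W (perm d l) d • lastIndicator (perm d) l := by
    funext S
    simp only [hF, fun d => finsetMax0_eq_sum_lastIndicator (perm d) (g := (W · d)) (hsorted d) S,
      Pi.add_apply, Finset.sum_apply, Pi.smul_apply, smul_eq_mul, mul_boole, sum_ite_mem, univ_inter]
  rw [← multilinearExtₗ_apply, hdecomp]
  simp only [map_add, map_sum, map_smul, multilinearExtₗ_apply, multilinearExt_boole_mem,
    multilinearExt_lastIndicator, smul_eq_mul, mul_assoc]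

/-- Multilinear extension of the FLID objective
`F(S) = ∑_{i∈S} u'_i + ∑_d max_{i∈S} W_{i,d}`: after sorting each column `d` of `W`
nondecreasingly via the permutation `perm d`, it equals
`∑_i u'_i x_i + ∑_d ∑_l W_{i_d(l),d} x_{i_d(l)} ∏_{m>l} (1 − x_{i_d(m)})`. -/
theorem multilinear_ext_FLID
    (n D : ℕ) (W : Fin n → Fin D → ℝ) (hW : ∀ i d, 0 ≤ W i d) (u' : Fin n → ℝ)
    (perm : Fin D → (Fin n ≃ Fin n))
    (hsorted : ∀ d : Fin D, ∀ l m : Fin n, l ≤ m → W (perm d l) d ≤ W (perm d m) d)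
    (F : Finset (Fin n) → ℝ)
    (hF : ∀ S, F S = (∑ i ∈ S, u' i) + ∑ d : Fin D, finsetMax0 S (fun i => W i d))
    (x : Fin n → ℝ) :
    multilinearExt n F x =
      (∑ i : Fin n, u' i * x i) +
        ∑ d : Fin D, ∑ l : Fin n,
          W (perm d l) d * x (perm d l) *
            ∏ m ∈ Finset.univ.filter (fun m : Fin n => l < m), (1 - x (perm d m)) :=
  multilinear_ext_FLID_general n D W u' perm hsorted F hF x
end

section
/- The key identity behind the FLID formula: for any x ∈ [0,1]^n and nondecreasing values w_1 ≤ w_2 ≤ ... ≤ w_n ≥ 0, ∑_{S⊆{1,...,n}, S≠∅} (max_{i∈S} w_i) ∏_{i∈S} x_i ∏_{j∉S}(1−x_j) = ∑_{l=1}^n w_l x_l ∏_{m=l+1}^n (1 − x_m). -/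
/-!
Every nonempty `S` is `insert l T` for its largest element `l` and a unique `T ⊆ Iio l`.
Summing over these decompositions, the weight of `S` becomes `w l` by monotonicity, and the
factors over `T ⊆ Iio l` sum to `∏_{j<l} (x_j + (1 - x_j)) = 1`, leaving
`w_l x_l ∏_{m>l} (1 - x_m)`.
-/

open Finset

theorem Finset.sum_powerset_prod_mul_prod_sdiff_one_sub {ι R : Type*} [DecidableEq ι]
    [CommRing R] (s : Finset ι) (x : ι → R) :
    ∑ T ∈ s.powerset, (∏ i ∈ T, x i) * ∏ j ∈ s \ T, (1 - x j) = 1 := by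
  simpa using (prod_add x (fun i => 1 - x i) s).symm

theorem finsetMax0_insert_of_le {α : Type*} [DecidableEq α] {g : α → ℝ} {l : α}
    {T : Finset α} (hT : ∀ i ∈ T, g i ≤ g l) : finsetMax0 (insert l T) g = g l := by
  rw [finsetMax0, dif_pos (insert_nonempty l T)]
  refine le_antisymm (sup'_le _ _ fun i hi => ?_) (le_sup' g (mem_insert_self l T))
  rcases mem_insert.mp hi with rfl | hi
  exacts [le_rfl, hT i hi]

section LinearOrder

variable {α : Type*} [LinearOrder α] [LocallyFiniteOrderBot α]

theorem Finset.sum_filter_nonempty_eq_sum_sum_powerset_Iio [Fintype α] {β : Type*}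
    [AddCommMonoid β] (f : Finset α → β) :
    ∑ S ∈ univ.filter (fun S : Finset α => S.Nonempty), f S =
      ∑ l, ∑ T ∈ (Iio l).powerset, f (insert l T) := by
  rw [sum_sigma']
  symm
  refine sum_bij' (fun p _ => insert p.1 p.2)
    (fun S hS => ⟨S.max' (by simpa using hS), S.erase (S.max' (by simpa using hS))⟩)
    (fun p _ => by simp) (fun S hS => ?_) (fun p hp => ?_) (fun S hS => ?_) (fun _ _ => rfl)
  · simp only [mem_sigma, mem_univ, true_and, mem_powerset]
    intro a ha
    exact mem_Iio.mpr (lt_of_le_of_ne (le_max' S a (mem_of_mem_erase ha)) (ne_of_mem_erase ha))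
  · simp only [mem_sigma, mem_univ, true_and, mem_powerset] at hp
    have hnotmem : p.1 ∉ p.2 := fun h => lt_irrefl _ (mem_Iio.mp (hp h))
    have hmax : (insert p.1 p.2).max' (insert_nonempty _ _) = p.1 :=
      le_antisymm
        (max'_le _ _ _ fun a ha =>
          (mem_insert.mp ha).elim le_of_eq fun ha => (mem_Iio.mp (hp ha)).le)
        (le_max' _ _ (mem_insert_self _ _))
    ext : 1 <;> simp [hmax, erase_insert hnotmem]
  · exact insert_erase (S.max'_mem (by simpa using hS))

theorem Finset.prod_compl_insert_of_subset_Iio [Fintype α] [LocallyFiniteOrderTop α]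
    {M : Type*} [CommMonoid M] {l : α} {T : Finset α}
    (hT : T ⊆ Iio l) (f : α → M) :
    ∏ j ∈ (insert l T)ᶜ, f j = (∏ j ∈ Iio l \ T, f j) * ∏ j ∈ Ioi l, f j := by
  have hcompl : (insert l T)ᶜ = (Iio l \ T) ∪ Ioi l := by
    ext a
    have := @hT a
    simp only [mem_compl, mem_insert, mem_union, mem_sdiff] at this ⊢
    rcases lt_trichotomy a l with h | rfl | h <;> grind
  rw [hcompl, prod_union ((disjoint_Ioi_Iio l).symm.mono_left sdiff_subset)]

end LinearOrder

theorem flid_key_identity_general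
    (n : ℕ) (w : Fin n → ℝ) (hmono : Monotone w)
    (x : Fin n → ℝ) :
    ∑ S ∈ Finset.univ.filter (fun S : Finset (Fin n) => S.Nonempty),
        finsetMax0 S w * ((∏ i ∈ S, x i) * ∏ j ∈ Sᶜ, (1 - x j)) =
      ∑ l : Fin n, w l * x l *
        ∏ m ∈ Finset.univ.filter (fun m : Fin n => l < m), (1 - x m) := by
  rw [sum_filter_nonempty_eq_sum_sum_powerset_Iio]
  refine sum_congr rfl fun l _ => ?_
  rw [filter_lt_eq_Ioi]
  calc ∑ T ∈ (Iio l).powerset, finsetMax0 (insert l T) w *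
        ((∏ i ∈ insert l T, x i) * ∏ j ∈ (insert l T)ᶜ, (1 - x j))
      = ∑ T ∈ (Iio l).powerset, (w l * x l * ∏ m ∈ Ioi l, (1 - x m)) *
          ((∏ i ∈ T, x i) * ∏ j ∈ Iio l \ T, (1 - x j)) := by
        refine sum_congr rfl fun T hT => ?_
        have hTl : T ⊆ Iio l := mem_powerset.mp hT
        have hl : l ∉ T := fun h => lt_irrefl l (mem_Iio.mp (hTl h))
        rw [finsetMax0_insert_of_le fun i hi => hmono (mem_Iio.mp (hTl hi)).le, prod_insert hl,
          prod_compl_insert_of_subset_Iio hTl]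
        ring
    _ = w l * x l * ∏ m ∈ Ioi l, (1 - x m) := by
        rw [← mul_sum, sum_powerset_prod_mul_prod_sdiff_one_sub, mul_one]

/-- The key identity behind the FLID formula: for nondecreasing nonnegative weights
`w_1 ≤ ... ≤ w_n` and `x ∈ [0,1]^n`,
`∑_{∅ ≠ S ⊆ [n]} (max_{i∈S} w_i) ∏_{i∈S} x_i ∏_{j∉S}(1−x_j)
  = ∑_l w_l x_l ∏_{m>l} (1 − x_m)`. -/
theorem flid_key_identity
    (n : ℕ) (w : Fin n → ℝ) (hw0 : ∀ i, 0 ≤ w i) (hmono : Monotone w)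
    (x : Fin n → ℝ) (hx : ∀ i, x i ∈ Set.Icc (0:ℝ) 1) :
    ∑ S ∈ Finset.univ.filter (fun S : Finset (Fin n) => S.Nonempty),
        finsetMax0 S w * ((∏ i ∈ S, x i) * ∏ j ∈ Sᶜ, (1 - x j)) =
      ∑ l : Fin n, w l * x l *
        ∏ m ∈ Finset.univ.filter (fun m : Fin n => l < m), (1 - x m) :=
  flid_key_identity_general n w hmono x
end
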